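/- Let Φ : ℝ^T → ℝ^T be the map sending θ to the vector of cell probabilities Φ(θ) = (p_θ(i_D, i*_{D^c}))_{(D,i_D)∈T}. Then Φ is differentiable and, for every θ ∈ ℝ^T, the determinant of its derivative satisfies det(DΦ(θ)) = ( ∏_{(D,i_D)∈T} p_θ(i_D, i*_{D^c}) ) · ( 1 − Σ_{∅≠H⊆V} Σ_{l_H∈I_H*} p_θ(l_H, i*_{H^c}) · Σ_{F∈𝒟, F⊆H} (−1)^{|F|−1} ). -/

import Mathlib

open Finset MeasureTheory

/-- The cell equal to `i` on `F` and to the baseline `b` off `F`. -/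
def cellOn {V : Type} [DecidableEq V] {I : V → Type} (b : ∀ γ, I γ)
    (F : Finset V) (i : ∀ γ, I γ) : ∀ γ, I γ :=
  fun γ => if γ ∈ F then i γ else b γ

/-- The support of a cell: the set of coordinates that are off baseline. -/
def cellSupport {V : Type} [Fintype V] [DecidableEq V] {I : V → Type}
    [∀ γ, DecidableEq (I γ)] (b : ∀ γ, I γ) (j : ∀ γ, I γ) : Finset V :=
  Finset.univ.filter (fun γ => j γ ≠ b γ)

/-- A generating class: a nonempty collection of nonempty subsets of `V` closed
under nonempty subsets. -/
def IsGenClass {V : Type} [DecidableEq V] (𝒟 : Finset (Finset V)) : Prop :=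
  𝒟.Nonempty ∧ (∀ D ∈ 𝒟, D ≠ ∅) ∧ ∀ D ∈ 𝒟, ∀ F ⊆ D, F ≠ ∅ → F ∈ 𝒟

/-- The index set `T = {(D, i_D) : D ∈ 𝒟, i_D ∈ I_D*}`; a tuple `i_D ∈ I_D*` is
represented by the unique cell whose support is exactly `D`. -/
def TParam {V : Type} [Fintype V] [DecidableEq V] (I : V → Type)
    [∀ γ, DecidableEq (I γ)] (b : ∀ γ, I γ) (𝒟 : Finset (Finset V)) : Type :=
  {x : Finset V × (∀ γ, I γ) // x.1 ∈ 𝒟 ∧ cellSupport b x.2 = x.1}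

noncomputable instance {V : Type} [Fintype V] [DecidableEq V] (I : V → Type)
    [∀ γ, Fintype (I γ)] [∀ γ, DecidableEq (I γ)] (b : ∀ γ, I γ)
    (𝒟 : Finset (Finset V)) : Fintype (TParam I b 𝒟) := by
  unfold TParam; infer_instance

instance {V : Type} [Fintype V] [DecidableEq V] (I : V → Type)
    [∀ γ, DecidableEq (I γ)] (b : ∀ γ, I γ)
    (𝒟 : Finset (Finset V)) : DecidableEq (TParam I b 𝒟) := by
  unfold TParam; infer_instance

/-- The exponent `Σ_{F ∈ 𝒟, F ⊆ S(j)} θ(F, j_F)` of the hierarchical model. -/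
noncomputable def energy {V : Type} [Fintype V] [DecidableEq V] {I : V → Type}
    [∀ γ, Fintype (I γ)] [∀ γ, DecidableEq (I γ)] (b : ∀ γ, I γ)
    (𝒟 : Finset (Finset V)) (θ : TParam I b 𝒟 → ℝ) (j : ∀ γ, I γ) : ℝ :=
  ∑ t : TParam I b 𝒟, if t.1.2 = cellOn b t.1.1 j then θ t else 0

/-- The partition function `Z(θ)`. -/
noncomputable def Zfun {V : Type} [Fintype V] [DecidableEq V] {I : V → Type}
    [∀ γ, Fintype (I γ)] [∀ γ, DecidableEq (I γ)] (b : ∀ γ, I γ)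
    (𝒟 : Finset (Finset V)) (θ : TParam I b 𝒟 → ℝ) : ℝ :=
  ∑ j : (∀ γ, I γ), Real.exp (energy b 𝒟 θ j)

/-- The log-partition function `k(θ) = log Z(θ)`. -/
noncomputable def kfun {V : Type} [Fintype V] [DecidableEq V] {I : V → Type}
    [∀ γ, Fintype (I γ)] [∀ γ, DecidableEq (I γ)] (b : ∀ γ, I γ)
    (𝒟 : Finset (Finset V)) (θ : TParam I b 𝒟 → ℝ) : ℝ :=
  Real.log (Zfun b 𝒟 θ)

/-- The hierarchical log-linear probability function `p_θ`. -/
noncomputable def phier {V : Type} [Fintype V] [DecidableEq V] {I : V → Type}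
    [∀ γ, Fintype (I γ)] [∀ γ, DecidableEq (I γ)] (b : ∀ γ, I γ)
    (𝒟 : Finset (Finset V)) (θ : TParam I b 𝒟 → ℝ) (j : ∀ γ, I γ) : ℝ :=
  Real.exp (energy b 𝒟 θ j) / Zfun b 𝒟 θ

/-!
Writing `p_θ(j) = exp (energy θ j - log Z(θ))` and using `∂ log Z / ∂θ_s = q_s`, the marginal
probability that a cell restricts to the tuple of `s`, the Jacobian matrix of `Φ` is
`diag(p) (Z - 1 qᵀ)`, where `Z` is the zeta matrix of the order on `T` given by restriction of
tuples. Ordering `T` by `|D|` shows that `Z` is unitriangular. Since `𝒟` contains every nonempty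
subset of its members, `Σ_{∅ ≠ F ⊆ D} (-1)^(|F|-1) = 1` gives `Z w = 1` for
`w_s = (-1)^(|D_s|-1)`, so `Z - 1 qᵀ = Z (1 - w qᵀ)`, whose determinant is `1 - q ⬝ w` by the
Weinstein–Aronszajn identity. Grouping the cells by their support turns `q ⬝ w` into the sum in
the statement.
-/

open Matrix in
theorem Matrix.det_sub_replicateRow_of_mulVec_eq_one {n R : Type*} [Fintype n] [DecidableEq n]
    [CommRing R] {A : Matrix n n R} {w : n → R} (hw : A *ᵥ w = 1) (q : n → R) :
    (A - replicateRow n q).det = A.det * (1 - q ⬝ᵥ w) := by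
  have hfac : A - replicateRow n q = A * (1 - replicateCol Unit w * replicateRow Unit q) := by
    rw [Matrix.mul_sub, Matrix.mul_one, ← vecMulVec_eq, mul_vecMulVec, hw, one_vecMulVec]
  rw [hfac, det_mul, det_one_sub_mul_comm, det_unique (1 - _)]
  simp [replicateRow_mul_replicateCol_apply]

theorem Finset.sum_powerset_filter_ne_empty_neg_one_pow_card_sub_one {α R : Type*}
    [DecidableEq α] [CommRing R] {D : Finset α} (hD : D.Nonempty) :
    ∑ F ∈ D.powerset.filter (· ≠ ∅), (-1 : R) ^ (F.card - 1) = 1 := by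
  have hsign : ∀ F ∈ D.powerset.erase ∅, (-1 : R) ^ (F.card - 1) = -(-1) ^ F.card := by
    intro F hF
    obtain ⟨m, hm⟩ :=
      Nat.exists_eq_add_of_lt (card_pos.2 (nonempty_iff_ne_empty.2 (ne_of_mem_erase hF)))
    simp [hm, pow_succ]
  have hall : ∑ F ∈ D.powerset, (-1 : R) ^ F.card = 0 := by
    simpa using congrArg (Int.cast : ℤ → R) (sum_powerset_neg_one_pow_card_of_nonempty hD)
  rw [filter_ne', sum_congr rfl hsign, sum_neg_distrib,
    sum_erase_eq_sub (empty_mem_powerset D), hall]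
  simp

section GenClass

variable {V : Type} [DecidableEq V] {𝒟 : Finset (Finset V)}

theorem IsGenClass.filter_subset_eq (h𝒟 : IsGenClass 𝒟) {D : Finset V} (hD : D ∈ 𝒟) :
    𝒟.filter (· ⊆ D) = D.powerset.filter (· ≠ ∅) := by
  ext F
  simp only [mem_filter, mem_powerset]
  exact ⟨fun ⟨hF, hFD⟩ => ⟨hFD, h𝒟.2.1 F hF⟩, fun ⟨hFD, hF⟩ => ⟨h𝒟.2.2 D hD F hFD hF, hFD⟩⟩

theorem IsGenClass.sum_filter_subset_neg_one_pow {R : Type*} [CommRing R] (h𝒟 : IsGenClass 𝒟)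
    {D : Finset V} (hD : D ∈ 𝒟) : ∑ F ∈ 𝒟.filter (· ⊆ D), (-1 : R) ^ (F.card - 1) = 1 := by
  rw [h𝒟.filter_subset_eq hD]
  exact sum_powerset_filter_ne_empty_neg_one_pow_card_sub_one
    (nonempty_iff_ne_empty.2 (h𝒟.2.1 D hD))

theorem IsGenClass.filter_subset_empty (h𝒟 : IsGenClass 𝒟) : 𝒟.filter (· ⊆ ∅) = ∅ :=
  filter_eq_empty_iff.2 fun F hF hF0 => h𝒟.2.1 F hF (subset_empty.1 hF0)

end GenClass

section Cells

variable {V : Type} [Fintype V] [DecidableEq V] {I : V → Type} [∀ γ, DecidableEq (I γ)]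
  (b : ∀ γ, I γ) {𝒟 : Finset (Finset V)}

theorem cellOn_cellSupport (j : ∀ γ, I γ) : cellOn b (cellSupport b j) j = j := by
  funext γ
  by_cases h : j γ = b γ <;> simp [cellOn, cellSupport, h]

variable {b}

theorem cellSupport_cellOn {F : Finset V} {j : ∀ γ, I γ} (h : F ⊆ cellSupport b j) :
    cellSupport b (cellOn b F j) = F := by
  ext γ
  by_cases hγ : γ ∈ F
  · simpa [cellSupport, cellOn, hγ] using h hγ
  · simp [cellSupport, cellOn, hγ]

theorem cellSupport_cellOn_subset (F : Finset V) (j : ∀ γ, I γ) :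
    cellSupport b (cellOn b F j) ⊆ cellSupport b j := by
  intro γ
  by_cases hγ : γ ∈ F <;> simp [cellSupport, cellOn, hγ]

theorem TParam.subset_cellSupport {s : TParam I b 𝒟} {j : ∀ γ, I γ}
    (h : s.1.2 = cellOn b s.1.1 j) : s.1.1 ⊆ cellSupport b j :=
  calc s.1.1 = cellSupport b s.1.2 := s.2.2.symm
    _ = cellSupport b (cellOn b s.1.1 j) := by rw [h]
    _ ⊆ cellSupport b j := cellSupport_cellOn_subset _ _

theorem TParam.eq_of_eq_cellOn_of_card_le {s t : TParam I b 𝒟}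
    (h : s.1.2 = cellOn b s.1.1 t.1.2) (hcard : t.1.1.card ≤ s.1.1.card) : s = t := by
  have hsub : s.1.1 ⊆ t.1.1 := t.2.2 ▸ TParam.subset_cellSupport h
  have hD : s.1.1 = t.1.1 := eq_of_subset_of_card_le hsub hcard
  have hcell : s.1.2 = t.1.2 := by rw [h, hD, ← t.2.2, cellOn_cellSupport]
  exact Subtype.ext (Prod.ext hD hcell)

theorem TParam.eq_cellOn_self (t : TParam I b 𝒟) : t.1.2 = cellOn b t.1.1 t.1.2 := by
  conv_lhs => rw [← cellOn_cellSupport b t.1.2, t.2.2]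

end Cells

section Model

open Matrix

variable {V : Type} [Fintype V] [DecidableEq V] {I : V → Type} [∀ γ, Fintype (I γ)]
  [∀ γ, DecidableEq (I γ)] (b : ∀ γ, I γ) (𝒟 : Finset (Finset V))

theorem sum_ite_eq_cellOn {M : Type*} [AddCommMonoid M] (f : Finset V → M) (j : ∀ γ, I γ) :
    ∑ s : TParam I b 𝒟, (if s.1.2 = cellOn b s.1.1 j then f s.1.1 else 0) =
      ∑ F ∈ 𝒟.filter (· ⊆ cellSupport b j), f F := by
  rw [← sum_filter]
  refine sum_bij' (fun s _ => s.1.1)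
    (fun F hF => ⟨(F, cellOn b F j), (mem_filter.1 hF).1, cellSupport_cellOn (mem_filter.1 hF).2⟩)
    (fun s hs => mem_filter.2 ⟨s.2.1, TParam.subset_cellSupport (mem_filter.1 hs).2⟩)
    (fun F _ => mem_filter.2 ⟨mem_univ _, rfl⟩)
    (fun s hs => Subtype.ext (Prod.ext rfl (mem_filter.1 hs).2.symm))
    (fun _ _ => rfl) (fun _ _ => rfl)

def zetaMatrix (R : Type*) [Zero R] [One R] : Matrix (TParam I b 𝒟) (TParam I b 𝒟) R :=
  Matrix.of fun t s => if s.1.2 = cellOn b s.1.1 t.1.2 then 1 else 0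

theorem zetaMatrix_mulVec_neg_one_pow {R : Type*} [CommRing R] (h𝒟 : IsGenClass 𝒟) :
    zetaMatrix b 𝒟 R *ᵥ (fun s => (-1) ^ (s.1.1.card - 1)) = 1 := by
  ext t
  simp only [mulVec, dotProduct, zetaMatrix, of_apply, ite_mul, one_mul, zero_mul]
  rw [sum_ite_eq_cellOn b 𝒟 (fun F => (-1 : R) ^ (F.card - 1)), t.2.2]
  exact h𝒟.sum_filter_subset_neg_one_pow t.2.1

theorem det_zetaMatrix {R : Type*} [CommRing R] : (zetaMatrix b 𝒟 R).det = 1 := by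
  have htri : (zetaMatrix b 𝒟 R).BlockTriangular fun t => OrderDual.toDual t.1.1.card := by
    intro t s hlt
    simp only [zetaMatrix, of_apply, ite_eq_right_iff]
    intro h
    exact absurd (card_le_card (t.2.2 ▸ TParam.subset_cellSupport h)) (not_le.2 hlt)
  have hblock :
      ∀ n, (zetaMatrix b 𝒟 R).toSquareBlock (fun t => OrderDual.toDual t.1.1.card) n = 1 := by
    intro n
    ext t s
    have hcard : t.1.1.1.card ≤ s.1.1.1.card :=
      (OrderDual.toDual.injective (s.2.trans t.2.symm)).ge
    by_cases hts : t = s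
    · subst hts
      simp [toSquareBlock_def, zetaMatrix, ← TParam.eq_cellOn_self]
    · have hne : ¬ s.1.1.2 = cellOn b s.1.1.1 t.1.1.2 := fun h =>
        hts (Subtype.ext (TParam.eq_of_eq_cellOn_of_card_le h hcard).symm)
      simp [toSquareBlock_def, zetaMatrix, hne, one_apply_ne hts]
  rw [htri.det]
  exact prod_eq_one fun n _ => by rw [hblock, det_one]

noncomputable def energyCLM (j : ∀ γ, I γ) : (TParam I b 𝒟 → ℝ) →L[ℝ] ℝ :=
  ∑ t, if t.1.2 = cellOn b t.1.1 j then ContinuousLinearMap.proj t else 0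

theorem energyCLM_apply (j : ∀ γ, I γ) (θ : TParam I b 𝒟 → ℝ) :
    energyCLM b 𝒟 j θ = energy b 𝒟 θ j := by
  simp only [energyCLM, energy, FunLike.coe_sum, Finset.sum_apply]
  exact sum_congr rfl fun t _ => by split_ifs <;> rfl

theorem energyCLM_single (j : ∀ γ, I γ) (s : TParam I b 𝒟) :
    energyCLM b 𝒟 j (Pi.single s 1) = if s.1.2 = cellOn b s.1.1 j then 1 else 0 := by
  rw [energyCLM_apply, energy, sum_eq_single s]
  · split_ifs <;> simp
  · intro t _ hts
    split_ifs <;> simp [hts]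
  · simp

theorem Zfun_pos (θ : TParam I b 𝒟 → ℝ) : 0 < Zfun b 𝒟 θ :=
  sum_pos (fun _ _ => Real.exp_pos _) ⟨b, mem_univ b⟩

theorem phier_eq_exp_sub_kfun (θ : TParam I b 𝒟 → ℝ) (j : ∀ γ, I γ) :
    phier b 𝒟 θ j = Real.exp (energy b 𝒟 θ j - kfun b 𝒟 θ) := by
  rw [phier, kfun, Real.exp_sub, Real.exp_log (Zfun_pos b 𝒟 θ)]

theorem hasFDerivAt_energy (j : ∀ γ, I γ) (θ : TParam I b 𝒟 → ℝ) :
    HasFDerivAt (energy b 𝒟 · j) (energyCLM b 𝒟 j) θ := by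
  simpa only [← energyCLM_apply] using (energyCLM b 𝒟 j).hasFDerivAt

theorem hasFDerivAt_kfun (θ : TParam I b 𝒟 → ℝ) :
    HasFDerivAt (kfun b 𝒟) (∑ k, phier b 𝒟 θ k • energyCLM b 𝒟 k) θ := by
  have hZ : HasFDerivAt (Zfun b 𝒟) (∑ k, Real.exp (energy b 𝒟 θ k) • energyCLM b 𝒟 k) θ :=
    HasFDerivAt.fun_sum fun k _ => (hasFDerivAt_energy b 𝒟 k θ).exp
  have h := hZ.log (Zfun_pos b 𝒟 θ).ne'
  simp only [smul_sum, smul_smul, ← div_eq_inv_mul] at h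
  exact h

theorem hasFDerivAt_phier (θ : TParam I b 𝒟 → ℝ) (j : ∀ γ, I γ) :
    HasFDerivAt (phier b 𝒟 · j)
      (phier b 𝒟 θ j • (energyCLM b 𝒟 j - ∑ k, phier b 𝒟 θ k • energyCLM b 𝒟 k)) θ := by
  simp only [phier_eq_exp_sub_kfun b 𝒟 _ j]
  exact ((hasFDerivAt_energy b 𝒟 j θ).sub (hasFDerivAt_kfun b 𝒟 θ)).exp

theorem hasFDerivAt_probMap (θ : TParam I b 𝒟 → ℝ) :
    HasFDerivAt (fun θ' (t : TParam I b 𝒟) => phier b 𝒟 θ' t.1.2)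
      (ContinuousLinearMap.pi fun t => phier b 𝒟 θ t.1.2 •
        (energyCLM b 𝒟 t.1.2 - ∑ k, phier b 𝒟 θ k • energyCLM b 𝒟 k)) θ :=
  hasFDerivAt_pi.2 fun t => hasFDerivAt_phier b 𝒟 θ t.1.2

noncomputable def marginalProb (θ : TParam I b 𝒟 → ℝ) (s : TParam I b 𝒟) : ℝ :=
  ∑ j ∈ univ.filter (fun j => s.1.2 = cellOn b s.1.1 j), phier b 𝒟 θ j

theorem toMatrix'_fderiv_probMap (θ : TParam I b 𝒟 → ℝ) :
    LinearMap.toMatrix'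
        (fderiv ℝ (fun θ' (t : TParam I b 𝒟) => phier b 𝒟 θ' t.1.2) θ).toLinearMap =
      diagonal (fun t => phier b 𝒟 θ t.1.2) *
        (zetaMatrix b 𝒟 ℝ - replicateRow (TParam I b 𝒟) (marginalProb b 𝒟 θ)) := by
  rw [(hasFDerivAt_probMap b 𝒟 θ).fderiv]
  ext t s
  simp [diagonal_mul, energyCLM_single, marginalProb, sum_filter, zetaMatrix]

theorem marginalProb_dotProduct (θ : TParam I b 𝒟 → ℝ) (f : Finset V → ℝ) :
    marginalProb b 𝒟 θ ⬝ᵥ (fun s => f s.1.1) =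
      ∑ j, phier b 𝒟 θ j * ∑ F ∈ 𝒟.filter (· ⊆ cellSupport b j), f F := by
  calc marginalProb b 𝒟 θ ⬝ᵥ (fun s => f s.1.1)
      = ∑ s : TParam I b 𝒟, ∑ j, if s.1.2 = cellOn b s.1.1 j then phier b 𝒟 θ j * f s.1.1
          else 0 := by
        simp only [dotProduct, marginalProb, sum_filter, sum_mul, ite_mul, zero_mul]
    _ = ∑ j, phier b 𝒟 θ j * ∑ s : TParam I b 𝒟,
          if s.1.2 = cellOn b s.1.1 j then f s.1.1 else 0 := by
        rw [sum_comm]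
        simp only [mul_sum, mul_ite, mul_zero]
    _ = _ := by simp only [sum_ite_eq_cellOn]

theorem sum_eq_sum_cellSupport_ne_empty {M : Type*} [AddCommMonoid M]
    (g : (∀ γ, I γ) → Finset V → M) (hg : ∀ j, g j ∅ = 0) :
    ∑ j, g j (cellSupport b j) =
      ∑ H ∈ (univ : Finset V).powerset.filter (· ≠ ∅),
        ∑ l ∈ univ.filter (fun l => cellSupport b l = H), g l H := by
  rw [powerset_univ, ← sum_fiberwise univ (cellSupport b), sum_filter_of_ne]
  · refine sum_congr rfl fun H _ => sum_congr rfl fun l hl => ?_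
    rw [(mem_filter.1 hl).2]
  · rintro H - hH rfl
    exact hH (sum_eq_zero fun l _ => hg l)

end Model

/-- The map `Φ : θ ↦ (p_θ(i_D, i*_{D^c}))_{(D,i_D)∈T}` is differentiable and the
determinant of its derivative is
`(∏_{(D,i_D)∈T} p_θ(i(D))) · (1 − Σ_{∅≠H⊆V} Σ_{l_H∈I_H*} p_θ(l(H)) Σ_{F∈𝒟,F⊆H} (−1)^{|F|−1})`. -/
theorem jacobian_theta_to_prob {V : Type} [Fintype V] [DecidableEq V]
    {I : V → Type} [∀ γ, Fintype (I γ)] [∀ γ, DecidableEq (I γ)]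
    (b : ∀ γ, I γ) (𝒟 : Finset (Finset V)) (h𝒟 : IsGenClass 𝒟) :
    Differentiable ℝ
      (fun (θ : TParam I b 𝒟 → ℝ) (t : TParam I b 𝒟) => phier b 𝒟 θ t.1.2) ∧
    ∀ θ : TParam I b 𝒟 → ℝ,
      LinearMap.det
        (fderiv ℝ (fun (θ' : TParam I b 𝒟 → ℝ) (t : TParam I b 𝒟) =>
          phier b 𝒟 θ' t.1.2) θ).toLinearMap =
      (∏ t : TParam I b 𝒟, phier b 𝒟 θ t.1.2) *
        (1 - ∑ H ∈ (Finset.univ : Finset V).powerset.filter (· ≠ ∅),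
              ∑ l ∈ Finset.univ.filter (fun l : (∀ γ, I γ) => cellSupport b l = H),
                phier b 𝒟 θ l * ∑ F ∈ 𝒟.filter (· ⊆ H), (-1 : ℝ) ^ (F.card - 1)) := by
  refine ⟨fun θ => (hasFDerivAt_probMap b 𝒟 θ).differentiableAt, fun θ => ?_⟩
  rw [← LinearMap.det_toMatrix', toMatrix'_fderiv_probMap, Matrix.det_mul, Matrix.det_diagonal,
    Matrix.det_sub_replicateRow_of_mulVec_eq_one (zetaMatrix_mulVec_neg_one_pow b 𝒟 h𝒟),
    det_zetaMatrix, one_mul]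
  have hsum := sum_eq_sum_cellSupport_ne_empty b
    (fun l H => phier b 𝒟 θ l * ∑ F ∈ 𝒟.filter (· ⊆ H), (-1 : ℝ) ^ (F.card - 1))
    fun l => by rw [h𝒟.filter_subset_empty, sum_empty, mul_zero]
  rw [← hsum, ← marginalProb_dotProduct]
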